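/- Fix integers n ≥ 1, m ≥ 2. Let f_m := Σ_{j=1}^{m−1} j(m−j)·E_{n+j+1,n+j} ∈ sl_{n+m}(ℂ). Then the centralizer {Z ∈ sl_{n+m}(ℂ) : Z·f_m = f_m·Z} equals the set of all matrices of the form Σ_{1≤i,j≤n} x_{ij}E_{i,j} − ((Σ_{i=1}^n x_{ii})/m)·Σ_{j=n+1}^{n+m} E_{j,j} + Σ_{i=1}^{n} u_i E_{i,n+1} + Σ_{i=1}^{n} v_i E_{n+m,i} + Σ_{k=1}^{m−1} w_k f_m^k with x_{ij}, u_i, v_i, w_k ∈ ℂ; in particular it has dimension n² + 2n + m − 1. (The explicit description of the Slodowy slice s_{n,m} = e_m + Ker ad(f_m) in sl_{n+m} from the proof of Theorem 3.1(a).) -/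

import Mathlib

/-!
Index the basis from `0`. Then `f = weightedShift (n + m) w` sends `e j` to `w j • e (j + 1)`,
where `w j = 0` for `j < n` and `w j ≠ 0` for `n ≤ j < n + m - 1`: it kills `e 0, …, e (n - 1)`
and is a regular nilpotent on the last `m` coordinates, with cyclic vector `e n`.

The explicit matrices commute with `f`: apart from the projection onto the last `m` coordinates,
which is `1` minus a sum of such matrices, they are combinations of powers of `f` and of
elementary matrices `E_{i,j}` with `j ≤ n` and `i < n` or `i = n + m - 1`, for which
`E_{i,j} f = f E_{i,j} = 0`.

Conversely, if `Z` commutes with `f`, comparing the entries of `Z f ^ k = f ^ k Z` in the column `n`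
shows that every column `n + k` of `Z` is determined by the column `n`, and comparing the entries
of `Z f = f Z` in the columns `j < n` shows that `Z e j ∈ ker f`. So `Z` is determined by its upper
left `n × n` block, the first `n` entries of its last row, and its column `n`, whose diagonal entry
is fixed by the trace. Reading off these data is a linear left inverse of the parametrization.
-/

open Matrix Finset

namespace Slodowy

section WeightedShift

variable {R : Type*} [CommSemiring R] {N : ℕ} {w : ℕ → R}

def weightedShift (N : ℕ) (w : ℕ → R) : Matrix (Fin N) (Fin N) R :=
  Matrix.of fun i j => if (i : ℕ) = j + 1 then w j else 0

lemma weightedShift_apply (i j : Fin N) :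
    weightedShift N w i j = if (i : ℕ) = j + 1 then w j else 0 := rfl

variable (w) in
def weightProd (j k : ℕ) : R := ∏ r ∈ range k, w (j + r)

lemma weightProd_add (j k l : ℕ) :
    weightProd w j (k + l) = weightProd w j k * weightProd w (j + k) l := by
  simp only [weightProd, prod_range_add, add_assoc]

lemma weightProd_one (j : ℕ) : weightProd w j 1 = w j := by simp [weightProd]

lemma weightProd_eq_zero {j k : ℕ} (hj : w j = 0) (hk : 0 < k) : weightProd w j k = 0 :=
  prod_eq_zero (mem_range.2 hk) (by rwa [add_zero])

lemma weightProd_ne_zero [NoZeroDivisors R] [Nontrivial R] {j k : ℕ}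
    (h : ∀ r < k, w (j + r) ≠ 0) : weightProd w j k ≠ 0 :=
  prod_ne_zero_iff.2 fun r hr => h r (mem_range.1 hr)

lemma mul_subdiagonal_apply {T : Matrix (Fin N) (Fin N) R} {k : ℕ} {g : ℕ → R}
    (hT : ∀ i j : Fin N, T i j = if (i : ℕ) = j + k then g j else 0)
    (M : Matrix (Fin N) (Fin N) R) (i j : Fin N) :
    (M * T) i j = if h : j + k < N then M i ⟨j + k, h⟩ * g j else 0 := by
  simp only [mul_apply, hT, mul_ite, mul_zero]
  split_ifs with h
  · rw [Fintype.sum_eq_single ⟨j + k, h⟩ fun b hb => if_neg fun e => hb (Fin.ext e),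
      if_pos rfl]
  · exact sum_eq_zero fun b _ => if_neg fun e => h (by have := b.isLt; omega)

lemma subdiagonal_mul_apply {T : Matrix (Fin N) (Fin N) R} {k : ℕ} {g : ℕ → R}
    (hT : ∀ i j : Fin N, T i j = if (i : ℕ) = j + k then g j else 0)
    (M : Matrix (Fin N) (Fin N) R) (i j : Fin N) :
    (T * M) i j = if h : k ≤ i then g (i - k) * M ⟨i - k, by omega⟩ j else 0 := by
  simp only [mul_apply, hT, ite_mul, zero_mul]
  split_ifs with h
  · rw [Fintype.sum_eq_single ⟨i - k, by omega⟩
      fun b hb => if_neg fun e => hb (Fin.ext (by simp; omega)), if_pos (by simp; omega)]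
  · exact sum_eq_zero fun b _ => if_neg fun e => h (by omega)

lemma weightedShift_pow_apply (k : ℕ) (i j : Fin N) :
    (weightedShift N w ^ k) i j = if (i : ℕ) = j + k then weightProd w j k else 0 := by
  induction k generalizing i j with
  | zero => simp [one_apply, Fin.ext_iff, weightProd]
  | succ k ih =>
    rw [pow_succ', subdiagonal_mul_apply weightedShift_apply, weightProd_add, weightProd_one]
    simp only [ih]
    split_ifs with h₁ h₂ h₃ <;> try omega
    · rw [h₂, mul_comm]
    · rw [mul_zero]
    · rfl

lemma trace_weightedShift_pow_succ (k : ℕ) : trace (weightedShift N w ^ (k + 1)) = 0 := by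
  simp [Matrix.trace, weightedShift_pow_apply]

lemma commute_weightedShift_pow_apply {Z : Matrix (Fin N) (Fin N) R}
    (hZ : Commute Z (weightedShift N w)) (k : ℕ) (i j : Fin N) :
    (if h : j + k < N then Z i ⟨j + k, h⟩ * weightProd w j k else 0) =
      if h : k ≤ i then weightProd w (i - k) k * Z ⟨i - k, by omega⟩ j else 0 := by
  have h := congrFun (congrFun (hZ.pow_right k).eq i) j
  rwa [mul_subdiagonal_apply (g := (weightProd w · k)) (weightedShift_pow_apply k),
    subdiagonal_mul_apply (g := (weightProd w · k)) (weightedShift_pow_apply k)] at h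

lemma sum_single_eq_weightedShift {n m : ℕ} (c : ℕ → R) :
    ∑ j : Fin (m - 1), single ⟨n + j.val + 1, by have := j.isLt; omega⟩
        ⟨n + j.val, by have := j.isLt; omega⟩ (c j) =
      weightedShift (n + m) (fun q => if n ≤ q then c (q - n) else 0) := by
  ext a b
  simp only [Matrix.sum_apply, single_apply, weightedShift_apply, Fin.ext_iff]
  split_ifs with h₁ h₂
  · rw [Fintype.sum_eq_single ⟨b - n, by omega⟩
      fun j hj => if_neg fun h => hj (Fin.ext (by simp; omega)), if_pos (by simp; omega)]
  all_goals exact sum_eq_zero fun j _ => if_neg (by omega)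

variable {n : ℕ}

lemma single_mul_weightedShift (hw0 : ∀ j < n, w j = 0) {a b : Fin N} (hb : (b : ℕ) ≤ n)
    (r : R) : single a b r * weightedShift N w = 0 := by
  ext i j
  rw [mul_subdiagonal_apply weightedShift_apply, Matrix.zero_apply]
  simp only [single_apply, Fin.ext_iff]
  split_ifs with h₁ h₂
  · rw [hw0 _ (by omega), mul_zero]
  all_goals simp

lemma weightedShift_mul_single (hw0 : ∀ j < n, w j = 0) {a b : Fin N}
    (ha : (a : ℕ) < n ∨ (a : ℕ) + 1 = N) (r : R) : weightedShift N w * single a b r = 0 := by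
  ext i j
  rw [subdiagonal_mul_apply weightedShift_apply, Matrix.zero_apply]
  simp only [single_apply, Fin.ext_iff]
  split_ifs with h₁ h₂
  · rw [hw0 _ (by omega), zero_mul]
  all_goals simp

lemma commute_single_weightedShift (hw0 : ∀ j < n, w j = 0) {a b : Fin N}
    (ha : (a : ℕ) < n ∨ (a : ℕ) + 1 = N) (hb : (b : ℕ) ≤ n) (r : R) :
    Commute (single a b r) (weightedShift N w) :=
  (single_mul_weightedShift hw0 hb r).trans (weightedShift_mul_single hw0 ha r).symm

end WeightedShift

section Centralizer

variable {K : Type*} [Field K] {n m : ℕ} {w : ℕ → K}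

abbrev CentralizerCoords (K : Type*) (n m : ℕ) :=
  Matrix (Fin n) (Fin n) K × (Fin n → K) × (Fin n → K) × (Fin (m - 1) → K)

variable (n m) in
def centralizerMatrix (hm : 0 < m) (w : ℕ → K) (x : Matrix (Fin n) (Fin n) K)
    (u v : Fin n → K) (c : Fin (m - 1) → K) : Matrix (Fin (n + m)) (Fin (n + m)) K :=
  (∑ i : Fin n, ∑ j : Fin n, x i j •
      single (Fin.castLE (Nat.le_add_right n m) i) (Fin.castLE (Nat.le_add_right n m) j) 1)
    - ((∑ i : Fin n, x i i) / (m : K)) •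
      (∑ j : Fin m, single (Fin.natAdd n j) (Fin.natAdd n j) 1)
    + (∑ i : Fin n, u i • single (Fin.castLE (Nat.le_add_right n m) i) ⟨n, by omega⟩ 1)
    + (∑ i : Fin n, v i •
        single ⟨n + m - 1, by omega⟩ (Fin.castLE (Nat.le_add_right n m) i) 1)
    + (∑ k : Fin (m - 1), c k • weightedShift (n + m) w ^ (k.val + 1))

variable (n m) in
def centralizerParam (hm : 0 < m) (w : ℕ → K) :
    CentralizerCoords K n m →ₗ[K] Matrix (Fin (n + m)) (Fin (n + m)) K where
  toFun p := centralizerMatrix n m hm w p.1 p.2.1 p.2.2.1 p.2.2.2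
  map_add' p q := by
    simp only [centralizerMatrix, Prod.fst_add, Prod.snd_add, Matrix.add_apply, Pi.add_apply,
      add_smul, sum_add_distrib, add_div]
    abel
  map_smul' c p := by
    simp only [centralizerMatrix, Prod.smul_fst, Prod.smul_snd, Matrix.smul_apply, Pi.smul_apply,
      smul_eq_mul, ← mul_sum, mul_div_assoc, smul_add, smul_sub, smul_sum, mul_smul,
      RingHom.id_apply]

/- The coefficient of `f ^ (k + 1)` is read off from the entry `(n + k + 1, n)`, where
`f ^ (k + 1)` has the entry `weightProd w n (k + 1)` and no other summand contributes. -/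
variable (n m) in
def centralizerCoord (hm : 0 < m) (w : ℕ → K) :
    Matrix (Fin (n + m)) (Fin (n + m)) K →ₗ[K] CentralizerCoords K n m where
  toFun Z :=
    (Matrix.of fun i j =>
        Z (Fin.castLE (Nat.le_add_right n m) i) (Fin.castLE (Nat.le_add_right n m) j),
      fun i => Z (Fin.castLE (Nat.le_add_right n m) i) ⟨n, by omega⟩,
      fun i => Z ⟨n + m - 1, by omega⟩ (Fin.castLE (Nat.le_add_right n m) i),
      fun k => Z ⟨n + k + 1, by omega⟩ ⟨n, by omega⟩ / weightProd w n (k + 1))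
  map_add' Z Z' := by
    ext <;> simp [add_div]
  map_smul' c Z := by
    ext <;> simp [mul_div_assoc]

lemma centralizerCoord_centralizerParam (hm : 0 < m) (hw0 : ∀ j < n, w j = 0)
    (hw : ∀ j, n ≤ j → j + 1 < n + m → w j ≠ 0) (p : CentralizerCoords K n m) :
    centralizerCoord n m hm w (centralizerParam n m hm w p) = p := by
  obtain ⟨x, u, v, c⟩ := p
  ext
  all_goals simp only [centralizerCoord, centralizerParam, centralizerMatrix, LinearMap.coe_mk,
    AddHom.coe_mk, Matrix.add_apply, Matrix.sub_apply, Matrix.smul_apply, of_apply,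
    Matrix.sum_apply, single_apply, weightedShift_pow_apply, Fin.ext_iff, Fin.val_castLE,
    Fin.val_natAdd, smul_eq_mul, mul_ite, mul_one, mul_zero]
  all_goals simp (disch := omega) only [if_neg, sum_const_zero, mul_zero, add_zero, sub_zero,
    zero_add]
  all_goals simp only [add_assoc, add_right_inj, add_left_inj, Fin.val_inj, true_and, and_true,
    ite_and, sum_ite_eq, sum_ite_eq', mem_univ, if_true]
  · simp [weightProd_eq_zero (hw0 _ _)]
  · exact mul_div_cancel_right₀ _ (weightProd_ne_zero fun r hr => hw _ (by omega) (by omega))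

lemma centralizerParam_injective (hm : 0 < m) (hw0 : ∀ j < n, w j = 0)
    (hw : ∀ j, n ≤ j → j + 1 < n + m → w j ≠ 0) :
    Function.Injective (centralizerParam n m hm w) :=
  Function.LeftInverse.injective (centralizerCoord_centralizerParam hm hw0 hw)

lemma trace_centralizerMatrix (hm : 0 < m) (hmK : (m : K) ≠ 0) (x : Matrix (Fin n) (Fin n) K)
    (u v : Fin n → K) (c : Fin (m - 1) → K) :
    trace (centralizerMatrix n m hm w x u v c) = 0 := by
  have htr (a b : Fin (n + m)) (r : K) :
      trace (single a b r) = if (a : ℕ) = b then r else 0 := by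
    split_ifs with h
    · rw [Fin.ext h, trace_single_eq_same]
    · exact trace_single_eq_of_ne _ _ _ (Fin.val_ne_iff.1 h)
  simp only [centralizerMatrix, trace_add, trace_sub, trace_smul, trace_sum, htr,
    trace_weightedShift_pow_succ, Fin.val_castLE, Fin.val_natAdd, if_true, smul_zero,
    sum_const_zero, add_zero]
  simp (disch := omega) only [if_neg, smul_zero, sum_const_zero, add_zero]
  simp [Fin.val_inj, div_mul_cancel₀ _ hmK]

lemma commute_centralizerMatrix (hm : 0 < m) (hw0 : ∀ j < n, w j = 0)
    (x : Matrix (Fin n) (Fin n) K) (u v : Fin n → K) (c : Fin (m - 1) → K) :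
    Commute (centralizerMatrix n m hm w x u v c) (weightedShift (n + m) w) := by
  have hproj : ∑ j : Fin m, single (Fin.natAdd n j) (Fin.natAdd n j) (1 : K) =
      1 - ∑ i : Fin n, single (Fin.castAdd m i) (Fin.castAdd m i) 1 := by
    rw [← sum_single_one, Fin.sum_univ_add, add_sub_cancel_left]
  have hsingle {a b : Fin (n + m)} (ha : (a : ℕ) < n ∨ (a : ℕ) + 1 = n + m)
      (hb : (b : ℕ) ≤ n) (r : K) := commute_single_weightedShift hw0 ha hb r
  refine (((Commute.sub_left ?_ ?_).add_left ?_).add_left ?_).add_left ?_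
  · exact Commute.sum_left _ _ _ fun i _ => Commute.sum_left _ _ _ fun j _ =>
      (hsingle (.inl i.isLt) j.isLt.le _).smul_left _
  · rw [hproj]
    exact ((Commute.one_left _).sub_left (Commute.sum_left _ _ _ fun i _ =>
      hsingle (.inl i.isLt) i.isLt.le _)).smul_left _
  · exact Commute.sum_left _ _ _ fun i _ => (hsingle (.inl i.isLt) le_rfl _).smul_left _
  · exact Commute.sum_left _ _ _ fun i _ =>
      (hsingle (.inr (by simp; omega)) i.isLt.le _).smul_left _
  · exact Commute.sum_left _ _ _ fun k _ => ((Commute.refl _).pow_left _).smul_left _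

section Commute

variable {Z : Matrix (Fin (n + m)) (Fin (n + m)) K}

lemma apply_eq_zero_of_commute (hZ : Commute Z (weightedShift (n + m) w))
    (hw0 : ∀ j < n, w j = 0) (hw : ∀ j, n ≤ j → j + 1 < n + m → w j ≠ 0)
    {a b : Fin (n + m)} (hb : (b : ℕ) < n) (ha : n ≤ a) (ha' : (a : ℕ) + 1 < n + m) :
    Z a b = 0 := by
  have h := commute_weightedShift_pow_apply hZ 1 ⟨a + 1, ha'⟩ b
  simp only [weightProd_one, hw0 b hb, mul_zero, dite_eq_ite, ite_self, Nat.add_sub_cancel,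
    Fin.eta] at h
  rw [if_pos (by omega)] at h
  exact (mul_eq_zero.1 h.symm).resolve_left (hw a ha ha')

lemma apply_mul_weightProd_of_commute (hZ : Commute Z (weightedShift (n + m) w))
    {a b : Fin (n + m)} (hb : n ≤ b) :
    Z a b * weightProd w n (b - n) =
      if h : (b : ℕ) - n ≤ a then
        weightProd w (a - (b - n)) (b - n) * Z ⟨a - (b - n), by omega⟩ ⟨n, by omega⟩
      else 0 := by
  have h := commute_weightedShift_pow_apply hZ (b - n) a ⟨n, by omega⟩
  rwa [dif_pos (by simp; omega),
    show (⟨n + (b - n), _⟩ : Fin (n + m)) = b from Fin.ext (by simp; omega)] at h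

lemma diag_eq_of_commute (hZ : Commute Z (weightedShift (n + m) w)) (hm : 0 < m)
    (hw : ∀ j, n ≤ j → j + 1 < n + m → w j ≠ 0) {b : Fin (n + m)} (hb : n ≤ b) :
    Z b b = Z ⟨n, Nat.lt_add_of_pos_right hm⟩ ⟨n, Nat.lt_add_of_pos_right hm⟩ := by
  have h := apply_mul_weightProd_of_commute hZ (a := b) hb
  rw [dif_pos (by omega)] at h
  simp only [show (b : ℕ) - (b - n) = n by omega] at h
  exact mul_right_cancel₀ (weightProd_ne_zero fun r hr => hw _ (by omega) (by omega))
    (h.trans (mul_comm _ _))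

lemma trace_eq_of_commute (hZ : Commute Z (weightedShift (n + m) w)) (hm : 0 < m)
    (hw : ∀ j, n ≤ j → j + 1 < n + m → w j ≠ 0) :
    trace Z = ∑ i : Fin n, Z (Fin.castAdd m i) (Fin.castAdd m i)
      + m * Z ⟨n, by omega⟩ ⟨n, by omega⟩ := by
  rw [trace, Fin.sum_univ_add]
  simp [diag_eq_of_commute hZ hm hw (b := Fin.natAdd n _) (by simp)]

lemma eq_zero_of_commute_of_col_eq_zero (hZ : Commute Z (weightedShift (n + m) w))
    (hm : 0 < m) (hw0 : ∀ j < n, w j = 0) (hw : ∀ j, n ≤ j → j + 1 < n + m → w j ≠ 0)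
    (hx : ∀ i j : Fin n,
      Z (Fin.castLE (Nat.le_add_right n m) i) (Fin.castLE (Nat.le_add_right n m) j) = 0)
    (hv : ∀ i : Fin n, Z ⟨n + m - 1, by omega⟩ (Fin.castLE (Nat.le_add_right n m) i) = 0)
    (hcol : ∀ a, Z a ⟨n, by omega⟩ = 0) : Z = 0 := by
  ext a b
  by_cases hb : (b : ℕ) < n
  · by_cases ha : (a : ℕ) < n
    · simpa using hx ⟨a, ha⟩ ⟨b, hb⟩
    by_cases ha' : (a : ℕ) + 1 = n + m
    · simpa [show a = ⟨n + m - 1, by omega⟩ from Fin.ext (by simp; omega)] using hv ⟨b, hb⟩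
    exact apply_eq_zero_of_commute hZ hw0 hw hb (not_lt.1 ha) (by omega)
  · have h := apply_mul_weightProd_of_commute hZ (a := a) (not_lt.1 hb)
    simp only [hcol, mul_zero, dite_eq_ite, ite_self] at h
    exact (mul_eq_zero.1 h).resolve_right
      (weightProd_ne_zero fun r hr => hw _ (by omega) (by omega))

lemma eq_zero_of_centralizerCoord_eq_zero (hZ : Commute Z (weightedShift (n + m) w))
    (hm : 0 < m) (hmK : (m : K) ≠ 0) (hw0 : ∀ j < n, w j = 0)
    (hw : ∀ j, n ≤ j → j + 1 < n + m → w j ≠ 0) (htr : trace Z = 0)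
    (hcoord : centralizerCoord n m hm w Z = 0) : Z = 0 := by
  simp only [centralizerCoord, LinearMap.coe_mk, AddHom.coe_mk, Prod.mk_eq_zero, funext_iff,
    ← Matrix.ext_iff, of_apply, Matrix.zero_apply, Pi.zero_apply, div_eq_zero_iff] at hcoord
  obtain ⟨hx, hu, hv, hc⟩ := hcoord
  refine eq_zero_of_commute_of_col_eq_zero hZ hm hw0 hw hx hv fun a => ?_
  rcases lt_trichotomy (a : ℕ) n with ha | ha | ha
  · simpa using hu ⟨a, ha⟩
  · have hdiag : ∑ i : Fin n, Z (Fin.castAdd m i) (Fin.castAdd m i) = 0 :=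
      sum_eq_zero fun i _ => hx i i
    rw [trace_eq_of_commute hZ hm hw, hdiag, zero_add] at htr
    simpa [show a = ⟨n, by omega⟩ from Fin.ext ha, hmK] using htr
  · have h := (hc ⟨a - n - 1, by omega⟩).resolve_right
      (weightProd_ne_zero fun r hr => hw _ (by omega) (by omega))
    convert h using 2
    ext
    simp
    omega

lemma eq_centralizerParam_centralizerCoord (hZ : Commute Z (weightedShift (n + m) w))
    (hm : 0 < m) (hmK : (m : K) ≠ 0) (hw0 : ∀ j < n, w j = 0)
    (hw : ∀ j, n ≤ j → j + 1 < n + m → w j ≠ 0) (htr : trace Z = 0) :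
    Z = centralizerParam n m hm w (centralizerCoord n m hm w Z) := by
  refine sub_eq_zero.1 (eq_zero_of_centralizerCoord_eq_zero
    (hZ.sub_left (commute_centralizerMatrix hm hw0 _ _ _ _)) hm hmK hw0 hw ?_ ?_)
  · rw [trace_sub, htr, centralizerParam, LinearMap.coe_mk, AddHom.coe_mk,
      trace_centralizerMatrix hm hmK, sub_zero]
  · rw [map_sub, centralizerCoord_centralizerParam hm hw0 hw, sub_self]

end Commute

theorem ker_trace_inf_ker_commutator_eq_range (hm : 0 < m) (hmK : (m : K) ≠ 0)
    (hw0 : ∀ j < n, w j = 0) (hw : ∀ j, n ≤ j → j + 1 < n + m → w j ≠ 0) :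
    LinearMap.ker (traceLinearMap (Fin (n + m)) K K) ⊓
        LinearMap.ker (LinearMap.mulRight K (weightedShift (n + m) w) -
          LinearMap.mulLeft K (weightedShift (n + m) w)) =
      LinearMap.range (centralizerParam n m hm w) := by
  ext Z
  simp only [Submodule.mem_inf, LinearMap.mem_ker, LinearMap.sub_apply, LinearMap.mulRight_apply,
    LinearMap.mulLeft_apply, traceLinearMap_apply, sub_eq_zero, LinearMap.mem_range]
  constructor
  · rintro ⟨htr, hZ⟩
    exact ⟨_, (eq_centralizerParam_centralizerCoord hZ hm hmK hw0 hw htr).symm⟩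
  · rintro ⟨⟨x, u, v, c⟩, rfl⟩
    exact ⟨trace_centralizerMatrix hm hmK x u v c, commute_centralizerMatrix hm hw0 x u v c⟩

end Centralizer

end Slodowy

open Slodowy

/-- Explicit description of the centralizer of `f_m` in `sl_{n+m}(ℂ)` (equivalently, of the
Slodowy slice `s_{n,m} = e_m + Ker ad(f_m)` shifted by `e_m`): it consists of the matrices
`Σ x_{ij}E_{i,j} − (Σ x_{ii}/m)·Σ_{j>n} E_{j,j} + Σ u_i E_{i,n+1} + Σ v_i E_{n+m,i} + Σ w_k f_m^k`;
in particular it has dimension `n² + 2n + m − 1`. -/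
theorem sl_slodowy_slice (n m : ℕ) (hm : 2 ≤ m)
    (fm : Matrix (Fin (n + m)) (Fin (n + m)) ℂ)
    (hfm : fm = ∑ j : Fin (m - 1),
      Matrix.single ⟨n + j.val + 1, by have := j.isLt; omega⟩
        ⟨n + j.val, by have := j.isLt; omega⟩ (((j.val + 1) * (m - (j.val + 1)) : ℕ) : ℂ)) :
    ((LinearMap.ker (Matrix.traceLinearMap (Fin (n + m)) ℂ ℂ) ⊓
        LinearMap.ker (LinearMap.mulRight ℂ fm - LinearMap.mulLeft ℂ fm) :
          Submodule ℂ (Matrix (Fin (n + m)) (Fin (n + m)) ℂ)) : Set _)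
      = {Z : Matrix (Fin (n + m)) (Fin (n + m)) ℂ |
          ∃ (x : Matrix (Fin n) (Fin n) ℂ) (u v : Fin n → ℂ) (w : Fin (m - 1) → ℂ),
            Z = (∑ i : Fin n, ∑ j : Fin n, x i j •
                  Matrix.single (Fin.castLE (by omega) i)
                    (Fin.castLE (by omega) j) (1 : ℂ))
              - ((∑ i : Fin n, x i i) / (m : ℂ)) •
                  (∑ j : Fin m, Matrix.single (Fin.natAdd n j) (Fin.natAdd n j) (1 : ℂ))
              + (∑ i : Fin n, u i • Matrix.single (Fin.castLE (by omega) i)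
                  ⟨n, by omega⟩ (1 : ℂ))
              + (∑ i : Fin n, v i • Matrix.single ⟨n + m - 1, by omega⟩
                  (Fin.castLE (by omega) i) (1 : ℂ))
              + (∑ k : Fin (m - 1), w k • fm ^ (k.val + 1))}
    ∧ Module.finrank ℂ
        ↥(LinearMap.ker (Matrix.traceLinearMap (Fin (n + m)) ℂ ℂ) ⊓
          LinearMap.ker (LinearMap.mulRight ℂ fm - LinearMap.mulLeft ℂ fm))
        = n ^ 2 + 2 * n + m - 1 := by
  have hm0 : 0 < m := by omega
  rw [sum_single_eq_weightedShift (fun j : ℕ => (((j + 1) * (m - (j + 1)) : ℕ) : ℂ))] at hfm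
  subst hfm
  set w : ℕ → ℂ := fun q =>
    if n ≤ q then (((q - n + 1) * (m - (q - n + 1)) : ℕ) : ℂ) else 0
  have hw0 : ∀ j < n, w j = 0 := fun j hj => if_neg (by omega)
  have hw : ∀ j, n ≤ j → j + 1 < n + m → w j ≠ 0 := fun j hj hj' => by
    simp only [w, if_pos hj, Nat.cast_ne_zero]
    exact Nat.mul_ne_zero (by omega) (by omega)
  rw [ker_trace_inf_ker_commutator_eq_range hm0 (by exact_mod_cast hm0.ne') hw0 hw]
  refine ⟨?_, ?_⟩
  · ext Z
    constructor
    · rintro ⟨⟨x, u, v, c⟩, rfl⟩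
      exact ⟨x, u, v, c, rfl⟩
    · rintro ⟨x, u, v, c, rfl⟩
      exact ⟨(x, u, v, c), rfl⟩
  · rw [LinearMap.finrank_range_of_inj (centralizerParam_injective hm0 hw0 hw)]
    simp [Module.finrank_matrix, sq]
    omega
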